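/- For every root γ ∈ K of the derivative f' there exist indices i ≠ j in {1, …, d} such that O(γ, α_k) ≤ O(γ, α_i) for all k = 1, …, d and O(γ, α_i) = O(α_i, α_j). (Note that γ ≠ α_k for all k, since f has no multiple roots, so all contact orders involved are finite.) -/

import Mathlib

/-!
Write `βₖ = γ - αₖ`. Since `f` is separable, `f(γ) ≠ 0`, so `f'(γ) = f(γ) ∑ₖ βₖ⁻¹` forces
`∑ₖ βₖ⁻¹ = 0`. Let `βᵢ` have maximal order `m`. The terms `βₖ⁻¹` of minimal order `-m` are
those with `ord βₖ = m`, and their leading coefficients must cancel. In characteristic zero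
these coefficients cannot all be equal, so some `βⱼ` of order `m` has a leading coefficient
different from that of `βᵢ`, and then `αᵢ - αⱼ = βⱼ - βᵢ` has order exactly `m`.
-/

open Polynomial Finset

theorem Finset.exists_ne_of_sum_eq_zero {ι M : Type*} [AddCommMonoid M] [IsAddTorsionFree M]
    {s : Finset ι} {g : ι → M} {i : ι} (hi : i ∈ s) (hgi : g i ≠ 0)
    (hsum : ∑ k ∈ s, g k = 0) : ∃ j ∈ s, g j ≠ g i := by
  by_contra! h
  rw [sum_congr rfl h, sum_const] at hsum
  exact hgi ((nsmul_eq_zero_iff.1 hsum).resolve_right (card_ne_zero_of_mem hi))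

theorem Polynomial.eval_derivative_prod_X_sub_C {ι F : Type*} [Field F] (s : Finset ι)
    (α : ι → F) {x : F} (hx : ∀ i ∈ s, x ≠ α i) :
    (derivative (∏ i ∈ s, (X - C (α i)))).eval x =
      (∏ i ∈ s, (x - α i)) * ∑ i ∈ s, (x - α i)⁻¹ := by
  classical
  rw [derivative_prod_finset, eval_finsetSum, mul_sum]
  refine sum_congr rfl fun i hi => ?_
  simp only [derivative_X_sub_C, mul_one, eval_prod, eval_sub, eval_X, eval_C]
  rw [← mul_prod_erase s _ hi, mul_comm (x - α i), mul_assoc,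
    mul_inv_cancel₀ (sub_ne_zero.2 (hx i hi)), mul_one]

namespace HahnSeries

section Order

variable {Γ R : Type*} [LinearOrder Γ] [Zero Γ]

theorem order_sub_eq_left_of_leadingCoeff_ne [AddGroup R] {x y : HahnSeries Γ R}
    (hord : x.order = y.order) (hlc : x.leadingCoeff ≠ y.leadingCoeff) :
    (x - y).order = x.order := by
  have hcoeff : (x - y).coeff x.order ≠ 0 := by
    rwa [coeff_sub, ← leadingCoeff_eq, hord, ← leadingCoeff_eq, sub_ne_zero]
  refine le_antisymm (order_le_of_coeff_ne_zero hcoeff) (le_of_not_gt fun hlt => ?_)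
  refine ne_zero_of_coeff_ne_zero hcoeff (coeff_order_eq_zero.1 ?_)
  rw [coeff_sub, coeff_eq_zero_of_lt_order hlt, coeff_eq_zero_of_lt_order (hord ▸ hlt), sub_zero]

theorem sum_leadingCoeff_filter_order_eq_zero [AddCommMonoid R] {ι : Type*} {s : Finset ι}
    {x : ι → HahnSeries Γ R} {m : Γ} (hsum : ∑ k ∈ s, x k = 0) (hm : ∀ k ∈ s, m ≤ (x k).order) :
    ∑ k ∈ s with (x k).order = m, (x k).leadingCoeff = 0 := by
  have hcoeff := congrArg (coeff · m) hsum
  simp only [coeff_sum, coeff_zero] at hcoeff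
  rw [← hcoeff, sum_filter]
  refine sum_congr rfl fun k hk => ?_
  split_ifs with h
  · rw [leadingCoeff_eq, h]
  · exact (coeff_eq_zero_of_lt_order (lt_of_le_of_ne (hm k hk) (Ne.symm h))).symm

end Order

section Field

variable {Γ R : Type*} [AddCommGroup Γ] [LinearOrder Γ] [IsOrderedAddMonoid Γ] [Field R]

theorem order_inv {x : HahnSeries Γ R} (hx : x ≠ 0) : x⁻¹.order = -x.order := by
  rw [eq_neg_iff_add_eq_zero, add_comm, ← order_mul hx (inv_ne_zero hx), mul_inv_cancel₀ hx,
    order_one]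

theorem leadingCoeff_inv (x : HahnSeries Γ R) : x⁻¹.leadingCoeff = x.leadingCoeff⁻¹ := by
  obtain rfl | hx := eq_or_ne x 0
  · simp
  · refine eq_inv_of_mul_eq_one_left ?_
    rw [← leadingCoeff_mul, inv_mul_cancel₀ hx, leadingCoeff_one]

theorem exists_order_eq_leadingCoeff_ne_of_sum_inv_eq_zero [CharZero R] {ι : Type*}
    {s : Finset ι} {x : ι → HahnSeries Γ R} {i : ι} (hi : i ∈ s) (hx : ∀ k ∈ s, x k ≠ 0)
    (hmax : ∀ k ∈ s, (x k).order ≤ (x i).order) (hsum : ∑ k ∈ s, (x k)⁻¹ = 0) :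
    ∃ j ∈ s, (x j).order = (x i).order ∧ (x j).leadingCoeff ≠ (x i).leadingCoeff := by
  have hm : ∀ k ∈ s, -(x i).order ≤ (x k)⁻¹.order := fun k hk => by
    rw [order_inv (hx k hk)]
    exact neg_le_neg (hmax k hk)
  obtain ⟨j, hj, hne⟩ := exists_ne_of_sum_eq_zero
    (mem_filter.2 ⟨hi, order_inv (hx i hi)⟩)
    (leadingCoeff_ne_zero.2 (inv_ne_zero (hx i hi)))
    (sum_leadingCoeff_filter_order_eq_zero hsum hm)
  obtain ⟨hjs, hjord⟩ := mem_filter.1 hj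
  refine ⟨j, hjs, neg_inj.1 (by rw [← order_inv (hx j hjs), hjord]), fun h => hne ?_⟩
  rw [leadingCoeff_inv, leadingCoeff_inv, h]

end Field

end HahnSeries

theorem kuo_lu_polar_grows_from_pseudo_ball
    (d : ℕ) (hd : 2 ≤ d)
    (α : Fin d → HahnSeries ℚ ℂ) (hinj : Function.Injective α)
    (f : Polynomial (HahnSeries ℚ ℂ))
    (hf : f = ∏ i, (Polynomial.X - Polynomial.C (α i)))
    (γ : HahnSeries ℚ ℂ) (hγ : (Polynomial.derivative f).IsRoot γ) :
    ∃ i j : Fin d, i ≠ j ∧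
      (∀ k : Fin d, (γ - α k).order ≤ (γ - α i).order) ∧
      (γ - α i).order = (α i - α j).order := by
  subst hf
  have hfγ : (∏ k, (X - C (α k))).eval γ ≠ 0 := fun h =>
    (separable_prod_X_sub_C_iff.2 hinj).eval₂_derivative_ne_zero (RingHom.id _) h hγ
  simp only [eval_prod, eval_sub, eval_X, eval_C] at hfγ
  have hβ : ∀ k, γ - α k ≠ 0 := fun k => prod_ne_zero_iff.1 hfγ k (mem_univ k)
  have hsum : ∑ k, (γ - α k)⁻¹ = 0 := by
    have h := eval_derivative_prod_X_sub_C univ α fun k _ => sub_ne_zero.1 (hβ k)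
    rw [hγ.eq_zero] at h
    exact (mul_eq_zero.1 h.symm).resolve_left hfγ
  obtain ⟨i, -, hmax⟩ := exists_max_image univ (fun k => (γ - α k).order)
    (univ_nonempty_iff.2 ⟨⟨0, by omega⟩⟩)
  obtain ⟨j, -, hord, hlc⟩ := HahnSeries.exists_order_eq_leadingCoeff_ne_of_sum_inv_eq_zero
    (mem_univ i) (fun k _ => hβ k) hmax hsum
  refine ⟨i, j, fun h => hlc (h ▸ rfl), fun k => hmax k (mem_univ k), ?_⟩
  rw [show α i - α j = (γ - α j) - (γ - α i) by abel,
    HahnSeries.order_sub_eq_left_of_leadingCoeff_ne hord hlc, hord]
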